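/- arXiv:1410.4383 — 3 statements merged into one kernel-verified Lean document; each statement's English description precedes it below -/
import Mathlib

section
/- Let 1 ≤ j < n and ε ∈ {±1}ⁿ. Then s_j w_ε is a minimal coset representative of W₀/Sₙ if and only if (ε_j, ε_{j+1}) ∈ {(+1,−1), (−1,+1)}, and in that case s_j w_ε = w_{s_j ε}. Moreover, for j = n, sₙ w_ε = w_{sₙ ε} is always a minimal coset representative. -/
/-- The simple reflections of the hyperoctahedral group `W₀ = Sₙ ⋉ (±1)ⁿ` acting on `ℂⁿ`:
for `i` with `i+1 < n`, `sᵢ` swaps coordinates `i` and `i+1`; the last simple reflection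
negates the last coordinate. -/
noncomputable def sEquiv (n : ℕ) (i : Fin n) : Equiv.Perm (Fin n → ℂ) :=
  if h : (i : ℕ) + 1 < n then
    (Equiv.swap i ⟨(i : ℕ) + 1, h⟩).arrowCongr (Equiv.refl ℂ)
  else
    Equiv.piCongrRight (fun j => if j = i then Equiv.neg ℂ else Equiv.refl ℂ)

/-- The element `sᵢ sᵢ₊₁ ⋯ sₙ` of `W₀` (all simple reflections from index `i` on, in
increasing order of index). -/
noncomputable def chainE (n : ℕ) (i : Fin n) : Equiv.Perm (Fin n → ℂ) :=
  (((List.finRange n).filter (fun j => decide (i ≤ j))).map (sEquiv n)).prod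

/-- The element `w_ε = (s_{i_k}⋯sₙ)⋯(s_{i₂}⋯sₙ)(s_{i₁}⋯sₙ)` of `W₀`, where
`i₁ < i₂ < ⋯ < i_k` are the positions of `-1` in `ε ∈ {±1}ⁿ`. -/
noncomputable def wE (n : ℕ) (ε : Fin n → ℤ) : Equiv.Perm (Fin n → ℂ) :=
  ((((List.finRange n).filter (fun i => decide (ε i = -1))).reverse).map (chainE n)).prod

/-- The standard basis vector `e_a` of `ℂⁿ`. -/
def eVec (n : ℕ) (a : Fin n) : Fin n → ℂ := fun j => if j = a then 1 else 0

/-- `v` is a positive root of the type `Bₙ` root system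
`{±eₐ±e_b (a≠b)} ∪ {±eₐ}`: i.e. `v = eₐ - e_b` or `eₐ + e_b` with `a < b`, or `v = eₐ`. -/
def isPosRoot (n : ℕ) (v : Fin n → ℂ) : Prop :=
  (∃ a b : Fin n, a < b ∧ v = eVec n a - eVec n b) ∨
  (∃ a b : Fin n, a < b ∧ v = eVec n a + eVec n b) ∨
  (∃ a : Fin n, v = eVec n a)

/-- `σ` is a minimal coset representative of `W₀/Sₙ`: `σ(α)` is a positive root for all
positive roots `α = eₐ - e_b` (`a < b`) in the span of `e₁-e₂,…,e_{n-1}-eₙ`. -/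
def isMinRep (n : ℕ) (σ : Equiv.Perm (Fin n → ℂ)) : Prop :=
  ∀ a b : Fin n, a < b → isPosRoot n (σ (eVec n a - eVec n b))


lemma sEquiv_apply_swap (n : ℕ) (i : Fin n) (h : (i : ℕ) + 1 < n) (f : Fin n → ℂ) (b : Fin n) :
    sEquiv n i f b = f (Equiv.swap i ⟨(i : ℕ) + 1, h⟩ b) := by
  simp [sEquiv, dif_pos h]

lemma sEquiv_apply_swap' (n : ℕ) (i : Fin n) (h : (i : ℕ) + 1 < n) (f : Fin n → ℂ) (b : Fin n) :
    sEquiv n i f b =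
      f (if b = i then ⟨(i : ℕ) + 1, h⟩ else if (b : ℕ) = (i : ℕ) + 1 then i else b) := by
  rw [sEquiv_apply_swap n i h]
  congr 1
  rw [Equiv.swap_apply_def]
  split_ifs with h1 h2 h3 h4 <;> simp_all [Fin.ext_iff]

lemma sEquiv_apply_last (n : ℕ) (i : Fin n) (h : ¬ ((i : ℕ) + 1 < n)) (f : Fin n → ℂ)
    (b : Fin n) : sEquiv n i f b = if b = i then -f b else f b := by
  simp only [sEquiv, dif_neg h, Equiv.piCongrRight_apply, Pi.map_apply]
  split_ifs <;> simp

lemma filter_le_eq_drop (n m : ℕ) :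
    (List.finRange n).filter (fun j : Fin n => decide (m ≤ (j : ℕ))) =
      (List.finRange n).drop m := by
  induction n generalizing m with
  | zero => simp [List.finRange]
  | succ n ih =>
    rw [List.finRange_succ]
    cases m with
    | zero => simp
    | succ m =>
      rw [List.filter_cons, List.filter_map]
      have : ((fun j : Fin (n+1) => decide (m + 1 ≤ (j : ℕ))) ∘ Fin.succ) =
          (fun j : Fin n => decide (m ≤ (j : ℕ))) := by
        funext j; simp [Fin.val_succ]
      simp only [this, ih, List.map_drop, List.drop_succ_cons]
      norm_num

lemma dropProd_apply (n : ℕ) : ∀ K m, n - m ≤ K → ∀ (f : Fin n → ℂ) (b : Fin n),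
    ((((List.finRange n).drop m).map (sEquiv n)).prod) f b =
      if (b : ℕ) < m then f b
      else if (b : ℕ) = m then -f ⟨n - 1, by have := b.isLt; omega⟩
      else f ⟨(b : ℕ) - 1, by have := b.isLt; omega⟩ := by
  intro K
  induction K with
  | zero =>
    intro m hm f b
    rw [List.drop_eq_nil_of_le (by simp; omega)]
    have hb : (b : ℕ) < m := by have := b.isLt; omega
    simp [hb]
  | succ K ih =>
    intro m hm f b
    rcases le_or_gt n m with hnm | hnm
    · rw [List.drop_eq_nil_of_le (by simp; omega)]
      have hb : (b : ℕ) < m := by have := b.isLt; omega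
      simp [hb]
    · have hlen : m < (List.finRange n).length := by simpa using hnm
      have hget : (List.finRange n)[m]'hlen = (⟨m, hnm⟩ : Fin n) := by
        apply Fin.ext; simp [List.getElem_finRange]
      rw [List.drop_eq_getElem_cons hlen, hget, List.map_cons, List.prod_cons,
        Equiv.Perm.mul_apply]
      have hrec := ih (m+1) (by omega) f
      rcases lt_or_ge (m + 1) n with hm1 | hm1
      · rw [sEquiv_apply_swap' n _ (by simpa using hm1), hrec]
        simp only [Fin.val_mk]
        by_cases hbm : b = ⟨m, hnm⟩
        · simp only [if_pos hbm, hbm, Fin.val_mk]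
          simp
        · simp only [if_neg hbm]
          have hbm' : (b : ℕ) ≠ m := by simpa [Fin.ext_iff] using hbm
          by_cases hbm1 : (b : ℕ) = m + 1
          · simp only [if_pos hbm1, Fin.val_mk]
            simp only [if_pos (show m < m + 1 by omega),
              if_neg (show ¬ ((b : ℕ) < m) by omega), if_neg hbm']
            exact congrArg f (Fin.ext (by simp; omega))
          · simp only [if_neg hbm1]
            rcases lt_trichotomy ((b : ℕ)) m with h1 | h1 | h1
            · simp only [if_pos (show (b : ℕ) < m + 1 by omega), if_pos h1]
            · exact absurd h1 hbm'
            · simp only [if_neg (show ¬ ((b : ℕ) < m + 1) by omega), if_neg hbm1,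
                if_neg (show ¬ ((b : ℕ) < m) by omega), if_neg hbm']
      · have hmn : m = n - 1 := by omega
        rw [sEquiv_apply_last n _ (by simp; omega), hrec b]
        by_cases hbm : b = ⟨m, hnm⟩
        · have hbv : (b : ℕ) = m := by rw [hbm]
          simp only [if_pos hbm, if_pos (show (b : ℕ) < m + 1 by omega),
            if_neg (show ¬ ((b : ℕ) < m) by omega), if_pos hbv]
          have hb2 : b = ⟨n - 1, by omega⟩ := Fin.ext (by simp [hbv, hmn])
          rw [hb2]
        · have hbv : (b : ℕ) ≠ m := by simpa [Fin.ext_iff] using hbm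
          have hblt : (b : ℕ) < m := by have := b.isLt; omega
          simp only [if_neg hbm, if_pos (show (b : ℕ) < m + 1 by omega), if_pos hblt]

lemma chainE_apply (n : ℕ) (i : Fin n) (f : Fin n → ℂ) (b : Fin n) :
    chainE n i f b =
      if (b : ℕ) < (i : ℕ) then f b
      else if (b : ℕ) = (i : ℕ) then -f ⟨n - 1, by have := b.isLt; omega⟩
      else f ⟨(b : ℕ) - 1, by have := b.isLt; omega⟩ := by
  have hfil : (List.finRange n).filter (fun j => decide (i ≤ j)) =
      (List.finRange n).drop (i : ℕ) := by
    rw [← filter_le_eq_drop]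
    apply List.filter_congr
    intro j _
    simp only [decide_eq_decide]
    exact Fin.le_def
  rw [chainE, hfil, dropProd_apply n (n - (i:ℕ)) (i:ℕ) le_rfl f b]

/-- card of a Finset of `Fin n` whose elements have values in `[a,b)` is at most `b - a`. -/
lemma card_le_of_mem_Ico (n : ℕ) (T : Finset (Fin n)) (a b : ℕ)
    (h : ∀ z ∈ T, a ≤ (z : ℕ) ∧ (z : ℕ) < b) : T.card ≤ b - a := by
  classical
  calc T.card = (T.image (fun z : Fin n => (z : ℕ) - a)).card := by
        rw [Finset.card_image_of_injOn]
        intro x hx y hy hxy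
        have hx' := h x hx
        have hy' := h y hy
        apply Fin.ext
        simp only at hxy
        omega
    _ ≤ (Finset.range (b - a)).card := by
        apply Finset.card_le_card
        intro z hz
        simp only [Finset.mem_image] at hz
        obtain ⟨x, hx, rfl⟩ := hz
        have := h x hx
        simp only [Finset.mem_range]
        omega
    _ = b - a := by simp

noncomputable def vnat (n : ℕ) (S : Finset (Fin n)) (b : Fin n) : ℕ :=
  if b ∈ S then n - (S.filter (· ≤ b)).card else (b : ℕ) - (S.filter (· < b)).card

lemma vnat_lt (n : ℕ) (S : Finset (Fin n)) (b : Fin n) : vnat n S b < n := by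
  classical
  rw [vnat]
  split_ifs with h
  · have h1 : 0 < (S.filter (· ≤ b)).card := by
      apply Finset.card_pos.mpr
      exact ⟨b, Finset.mem_filter.mpr ⟨h, le_rfl⟩⟩
    have := b.isLt
    omega
  · have := b.isLt
    have h2 : (b : ℕ) - (S.filter (· < b)).card ≤ (b : ℕ) := Nat.sub_le _ _
    omega

noncomputable def vFin (n : ℕ) (S : Finset (Fin n)) (b : Fin n) : Fin n :=
  ⟨vnat n S b, vnat_lt n S b⟩

/-- Key computation: product of `chainE` over a strictly decreasing list. -/
lemma prod_chainE_apply (n : ℕ) (L : List (Fin n)) (hL : L.Pairwise (· > ·))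
    (f : Fin n → ℂ) (b : Fin n) :
    ((L.map (chainE n)).prod) f b =
      (if b ∈ L then -1 else 1) * f (vFin n L.toFinset b) := by
  classical
  induction L generalizing b with
  | nil =>
    have hv : vFin n (∅ : Finset (Fin n)) b = b := Fin.ext (by simp [vFin, vnat])
    simp [hv]
  | cons x L ih =>
    have hlt : ∀ y ∈ L, y < x := fun y hy => (List.pairwise_cons.mp hL).1 y hy
    have hxL : x ∉ L := fun hx => lt_irrefl x (hlt x hx)
    have hxF : x ∉ L.toFinset := by simpa using hxL
    have hIH := ih (List.pairwise_cons.mp hL).2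
    rw [List.map_cons, List.prod_cons, Equiv.Perm.mul_apply, chainE_apply]
    have hTF : (x :: L).toFinset = insert x L.toFinset := by simp
    rcases lt_trichotomy ((b : ℕ)) ((x : ℕ)) with h1 | h1 | h1
    · -- b < x : untouched
      rw [if_pos h1, hIH b]
      have hbx : b ≠ x := by intro hc; rw [hc] at h1; omega
      have hmem : (b ∈ x :: L) ↔ (b ∈ L) := by
        simp [List.mem_cons, hbx]
      rw [if_congr hmem rfl rfl]
      congr 2
      · -- vFin equal
        apply Fin.ext
        simp only [vFin, vnat, hTF]
        have hbS : b ∈ insert x L.toFinset ↔ b ∈ L.toFinset := by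
          simp [Finset.mem_insert, hbx]
        rw [if_congr hbS rfl rfl]
        have hfle : (insert x L.toFinset).filter (· ≤ b) = L.toFinset.filter (· ≤ b) := by
          rw [Finset.filter_insert, if_neg (by
            intro hc
            have : (x : ℕ) ≤ (b : ℕ) := hc
            omega)]
        have hflt : (insert x L.toFinset).filter (· < b) = L.toFinset.filter (· < b) := by
          rw [Finset.filter_insert, if_neg (by
            intro hc
            have : (x : ℕ) < (b : ℕ) := hc
            omega)]
        rw [hfle, hflt]
    · -- b = x
      have hbx : b = x := Fin.ext h1
      rw [if_neg (by omega), if_pos h1, hIH]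
      have hlast : (⟨n - 1, by have := b.isLt; omega⟩ : Fin n) ∉ L := by
        intro hc
        have := hlt _ hc
        have : (n - 1 : ℕ) < (x : ℕ) := this
        have := x.isLt
        omega
      rw [if_neg hlast, if_pos (by simp [hbx])]
      rw [one_mul, neg_one_mul]
      congr 2
      apply Fin.ext
      simp only [vFin, vnat, hTF]
      have hlastF : (⟨n - 1, by have := b.isLt; omega⟩ : Fin n) ∉ L.toFinset := by
        simpa using hlast
      rw [if_neg hlastF, if_pos (by simp [hbx])]
      have hup : L.toFinset.filter (· < (⟨n - 1, by have := b.isLt; omega⟩ : Fin n)) =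
          L.toFinset := by
        apply Finset.filter_true_of_mem
        intro z hz
        have hzx := hlt z (by simpa using hz)
        have : (z : ℕ) < (x : ℕ) := hzx
        have := x.isLt
        show (z : ℕ) < n - 1
        omega
      have hdn : (insert x L.toFinset).filter (· ≤ b) = insert x L.toFinset := by
        apply Finset.filter_true_of_mem
        intro z hz
        rcases Finset.mem_insert.mp hz with rfl | hz
        · exact le_of_eq hbx.symm
        · have := hlt z (by simpa using hz)
          show (z : ℕ) ≤ (b : ℕ)
          have : (z : ℕ) < (x : ℕ) := this
          omega
      rw [hup, hdn, Finset.card_insert_of_notMem hxF]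
      have hcard : L.toFinset.card ≤ (x : ℕ) := by
        apply card_le_of_mem_Ico n _ 0 (x : ℕ)
        intro z hz
        have := hlt z (by simpa using hz)
        exact ⟨Nat.zero_le _, this⟩
      have := b.isLt
      omega
    · -- b > x
      rw [if_neg (by omega), if_neg (by omega), hIH]
      have hbm : (⟨(b : ℕ) - 1, by have := b.isLt; omega⟩ : Fin n) ∉ L.toFinset → True := fun _ => trivial
      have hb1 : ((⟨(b : ℕ) - 1, by have := b.isLt; omega⟩ : Fin n) : ℕ) = (b : ℕ) - 1 := rfl
      have hnotL : (⟨(b : ℕ) - 1, by have := b.isLt; omega⟩ : Fin n) ∉ L := by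
        intro hc
        have := hlt _ hc
        have : (b : ℕ) - 1 < (x : ℕ) := this
        omega
      have hnotCons : b ∉ x :: L := by
        intro hc
        rcases List.mem_cons.mp hc with rfl | hc
        · omega
        · have := hlt _ hc
          have : (b : ℕ) < (x : ℕ) := this
          omega
      rw [if_neg hnotL, if_neg hnotCons, one_mul, one_mul]
      congr 1
      apply Fin.ext
      simp only [vFin, vnat, hTF]
      have hnotF : (⟨(b : ℕ) - 1, by have := b.isLt; omega⟩ : Fin n) ∉ L.toFinset := by
        simpa using hnotL
      have hnotIns : b ∉ insert x L.toFinset := by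
        simp only [Finset.mem_insert]
        rintro (rfl | hc)
        · omega
        · exact hnotCons (List.mem_cons_of_mem x (by simpa using hc))
      rw [if_neg hnotF, if_neg hnotIns]
      have hflt : (insert x L.toFinset).filter (· < b) =
          insert x (L.toFinset.filter (· < (⟨(b : ℕ) - 1, by have := b.isLt; omega⟩ : Fin n)))
          := by
        rw [Finset.filter_insert, if_pos (show x < b from h1)]
        congr 1
        apply Finset.filter_congr
        intro z hz
        have hzx := hlt z (by simpa using hz)
        have hzx' : (z : ℕ) < (x : ℕ) := hzx
        constructor
        · intro _; show (z : ℕ) < (b : ℕ) - 1; omega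
        · intro _; show (z : ℕ) < (b : ℕ); omega
      rw [hflt, Finset.card_insert_of_notMem (by
        simp only [Finset.mem_filter]
        rintro ⟨hc, -⟩
        exact hxF hc)]
      have hcard : (L.toFinset.filter (· < (⟨(b : ℕ) - 1, by have := b.isLt; omega⟩ : Fin n))).card
          ≤ (b : ℕ) - 1 := by
        apply card_le_of_mem_Ico n _ 0 ((b : ℕ) - 1)
        intro z hz
        have := (Finset.mem_filter.mp hz).2
        exact ⟨Nat.zero_le _, this⟩
      omega

noncomputable def minusSet (n : ℕ) (ε : Fin n → ℤ) : Finset (Fin n) :=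
  Finset.univ.filter (fun c => ε c = -1)

lemma wE_apply (n : ℕ) (ε : Fin n → ℤ) (f : Fin n → ℂ) (b : Fin n) :
    wE n ε f b = (if ε b = -1 then (-1 : ℂ) else 1) * f (vFin n (minusSet n ε) b) := by
  classical
  set L := ((List.finRange n).filter (fun i => decide (ε i = -1))).reverse with hLdef
  have hpw : L.Pairwise (· > ·) := by
    rw [hLdef, List.pairwise_reverse]
    exact List.Pairwise.filter _ (List.pairwise_lt_finRange n)
  have hmem : ∀ c : Fin n, c ∈ L ↔ ε c = -1 := by
    intro c
    rw [hLdef, List.mem_reverse, List.mem_filter]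
    simp [List.mem_finRange]
  have hTF : L.toFinset = minusSet n ε := by
    ext c
    rw [List.mem_toFinset, hmem, minusSet, Finset.mem_filter]
    simp
  rw [wE, prod_chainE_apply n L hpw f b, hTF, if_congr (hmem b) rfl rfl]

-- order lemmas
lemma vnat_mono_notmem (n : ℕ) (S : Finset (Fin n)) (x y : Fin n)
    (hx : x ∉ S) (hy : y ∉ S) (hxy : x < y) : vnat n S x < vnat n S y := by
  classical
  rw [vnat, vnat, if_neg hx, if_neg hy]
  have hxy' : (x : ℕ) < (y : ℕ) := hxy
  have hsub : S.filter (· < x) ⊆ S.filter (· < y) := by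
    intro z hz
    rw [Finset.mem_filter] at hz ⊢
    exact ⟨hz.1, lt_trans hz.2 hxy⟩
  have hA : (S.filter (· < x)).card ≤ (x : ℕ) :=
    card_le_of_mem_Ico n _ 0 (x : ℕ) (fun z hz => ⟨Nat.zero_le _, (Finset.mem_filter.mp hz).2⟩)
  have hdiff : (S.filter (· < y)).card ≤ (S.filter (· < x)).card + ((y : ℕ) - (x : ℕ) - 1) := by
    have hsplit : S.filter (· < y) ⊆ S.filter (· < x) ∪ S.filter (fun z => x < z ∧ z < y) := by
      intro z hz
      rw [Finset.mem_filter] at hz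
      rw [Finset.mem_union, Finset.mem_filter, Finset.mem_filter]
      rcases lt_trichotomy z x with h | h | h
      · exact Or.inl ⟨hz.1, h⟩
      · exact absurd (h ▸ hz.1) hx
      · exact Or.inr ⟨hz.1, h, hz.2⟩
    calc (S.filter (· < y)).card ≤ (S.filter (· < x) ∪ S.filter (fun z => x < z ∧ z < y)).card :=
          Finset.card_le_card hsplit
      _ ≤ (S.filter (· < x)).card + (S.filter (fun z => x < z ∧ z < y)).card :=
          Finset.card_union_le _ _
      _ ≤ (S.filter (· < x)).card + ((y : ℕ) - ((x : ℕ) + 1)) := by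
          gcongr
          apply card_le_of_mem_Ico n _ ((x : ℕ) + 1) (y : ℕ)
          intro z hz
          have h2 := (Finset.mem_filter.mp hz).2
          have h21 : (x : ℕ) < (z : ℕ) := h2.1
          have h22 : (z : ℕ) < (y : ℕ) := h2.2
          omega
      _ = (S.filter (· < x)).card + ((y : ℕ) - (x : ℕ) - 1) := by omega
  omega

lemma vnat_anti_mem (n : ℕ) (S : Finset (Fin n)) (x y : Fin n)
    (hx : x ∈ S) (hy : y ∈ S) (hxy : x < y) : vnat n S y < vnat n S x := by
  classical
  rw [vnat, vnat, if_pos hx, if_pos hy]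
  have hss : S.filter (· ≤ x) ⊂ S.filter (· ≤ y) := by
    constructor
    · intro z hz
      rw [Finset.mem_filter] at hz ⊢
      exact ⟨hz.1, le_trans hz.2 (le_of_lt hxy)⟩
    · intro hc
      have hyx := hc (Finset.mem_filter.mpr ⟨hy, le_rfl⟩)
      have := (Finset.mem_filter.mp hyx).2
      have h1 : (y : ℕ) ≤ (x : ℕ) := this
      have h2 : (x : ℕ) < (y : ℕ) := hxy
      omega
  have hc1 := Finset.card_lt_card hss
  have hc2 : (S.filter (· ≤ y)).card ≤ n := by
    calc (S.filter (· ≤ y)).card ≤ S.card := Finset.card_le_card (Finset.filter_subset _ _)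
      _ ≤ Fintype.card (Fin n) := Finset.card_le_univ S
      _ = n := by simp
  have hc0 : 0 < (S.filter (· ≤ x)).card :=
    Finset.card_pos.mpr ⟨x, Finset.mem_filter.mpr ⟨hx, le_rfl⟩⟩
  omega

lemma vnat_sep (n : ℕ) (S : Finset (Fin n)) (x y : Fin n)
    (hx : x ∉ S) (hy : y ∈ S) : vnat n S x < vnat n S y := by
  classical
  rw [vnat, vnat, if_neg hx, if_pos hy]
  have hsplit := Finset.card_filter_add_card_filter_not (s := S) (p := (· < x))
  have hA : (S.filter (· < x)).card ≤ (x : ℕ) :=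
    card_le_of_mem_Ico n _ 0 (x : ℕ) (fun z hz => ⟨Nat.zero_le _, (Finset.mem_filter.mp hz).2⟩)
  have hC : (S.filter (fun z => ¬ z < x)).card ≤ n - ((x : ℕ) + 1) := by
    apply card_le_of_mem_Ico n _ ((x : ℕ) + 1) n
    intro z hz
    have hz2 := (Finset.mem_filter.mp hz).2
    have hz1 := (Finset.mem_filter.mp hz).1
    have hzx : (x : ℕ) ≤ (z : ℕ) := le_of_not_gt hz2
    have hne : (z : ℕ) ≠ (x : ℕ) := by
      intro hc
      exact hx ((Fin.ext hc : z = x) ▸ hz1)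
    exact ⟨by omega, z.isLt⟩
  have hB : (S.filter (· ≤ y)).card ≤ S.card := Finset.card_le_card (Finset.filter_subset _ _)
  have hxn := x.isLt
  omega

lemma vFin_injective (n : ℕ) (S : Finset (Fin n)) : Function.Injective (vFin n S) := by
  intro x y hxy
  by_contra hne
  have hv : vnat n S x = vnat n S y := congrArg Fin.val hxy
  rcases lt_trichotomy x y with h | h | h
  · by_cases hx : x ∈ S <;> by_cases hy : y ∈ S
    · exact absurd hv (ne_of_gt (vnat_anti_mem n S x y hx hy h))
    · exact absurd hv (ne_of_gt (vnat_sep n S y x hy hx))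
    · exact absurd hv (ne_of_lt (vnat_sep n S x y hx hy))
    · exact absurd hv (ne_of_lt (vnat_mono_notmem n S x y hx hy h))
  · exact hne h
  · by_cases hx : x ∈ S <;> by_cases hy : y ∈ S
    · exact absurd hv (ne_of_lt (vnat_anti_mem n S y x hy hx h))
    · exact absurd hv (ne_of_gt (vnat_sep n S y x hy hx))
    · exact absurd hv (ne_of_lt (vnat_sep n S x y hx hy))
    · exact absurd hv (ne_of_gt (vnat_mono_notmem n S y x hy hx h))

lemma vFin_surjective (n : ℕ) (S : Finset (Fin n)) : Function.Surjective (vFin n S) :=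
  Finite.surjective_of_injective (vFin_injective n S)

/-- image of the root `e_{v x} - e_{v y}` under `wE`. -/
lemma wE_root (n : ℕ) (ε : Fin n → ℤ) (x y : Fin n) (hxy : x ≠ y) :
    wE n ε (eVec n (vFin n (minusSet n ε) x) - eVec n (vFin n (minusSet n ε) y)) =
      fun c => (if ε c = -1 then (-1 : ℂ) else 1) *
        ((if c = x then 1 else 0) - (if c = y then 1 else 0)) := by
  funext c
  rw [wE_apply]
  congr 1
  simp only [Pi.sub_apply, eVec]
  have h1 : (vFin n (minusSet n ε) c = vFin n (minusSet n ε) x) ↔ c = x :=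
    ⟨fun h => vFin_injective n _ h, fun h => by rw [h]⟩
  have h2 : (vFin n (minusSet n ε) c = vFin n (minusSet n ε) y) ↔ c = y :=
    ⟨fun h => vFin_injective n _ h, fun h => by rw [h]⟩
  rw [if_congr h1 rfl rfl, if_congr h2 rfl rfl]

lemma mem_minusSet (n : ℕ) (ε : Fin n → ℤ) (c : Fin n) :
    c ∈ minusSet n ε ↔ ε c = -1 := by
  rw [minusSet, Finset.mem_filter]; simp

/-- `wE` is always a minimal coset representative. -/
lemma wE_isMinRep (n : ℕ) (ε : Fin n → ℤ) (hε : ∀ i, ε i = 1 ∨ ε i = -1) :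
    isMinRep n (wE n ε) := by
  classical
  intro a b hab
  set S := minusSet n ε with hS
  obtain ⟨x, hx⟩ := vFin_surjective n S a
  obtain ⟨y, hy⟩ := vFin_surjective n S b
  have hxy : x ≠ y := by
    rintro rfl
    rw [hx] at hy
    exact absurd (hy ▸ hab) (lt_irrefl _)
  have hkey := wE_root n ε x y hxy
  rw [hx, hy] at hkey
  have hvab : vnat n S x < vnat n S y := by
    have : (vFin n S x : ℕ) < (vFin n S y : ℕ) := by rw [hx, hy]; exact hab
    exact this
  by_cases hxS : x ∈ S <;> by_cases hyS : y ∈ S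
  · -- both minus: y < x, root = e_y - e_x
    have hyx : y < x := by
      rcases lt_trichotomy x y with h | h | h
      · exact absurd hvab (not_lt_of_gt (vnat_anti_mem n S x y hxS hyS h))
      · exact absurd h hxy
      · exact h
    have hεx : ε x = -1 := (mem_minusSet n ε x).mp hxS
    have hεy : ε y = -1 := (mem_minusSet n ε y).mp hyS
    left
    refine ⟨y, x, hyx, ?_⟩
    rw [hkey]
    funext c
    simp only [Pi.sub_apply, eVec]
    by_cases hcx : c = x <;> by_cases hcy : c = y
    · exact absurd (hcx.symm.trans hcy) hxy
    · simp [hcx, hcy, hεx, hxy, hxy.symm]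
    · simp [hcy, hcx, hεy, hxy, hxy.symm]
    · simp [hcx, hcy, hxy, hxy.symm]
  · -- x minus, y plus: impossible since vnat x > vnat y
    exact absurd hvab (not_lt_of_gt (vnat_sep n S y x hyS hxS))
  · -- x plus, y minus: root = e_x + e_y
    have hεx : ε x = 1 := (hε x).resolve_right (fun h => hxS ((mem_minusSet n ε x).mpr h))
    have hεy : ε y = -1 := (mem_minusSet n ε y).mp hyS
    have hεx' : ¬ (ε x = -1) := by rw [hεx]; norm_num
    right; left
    rcases lt_or_gt_of_ne hxy with h | h
    · refine ⟨x, y, h, ?_⟩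
      rw [hkey]
      funext c
      simp only [Pi.add_apply, eVec]
      by_cases hcx : c = x <;> by_cases hcy : c = y
      · exact absurd (hcx.symm.trans hcy) hxy
      · simp [hcx, hcy, hεx', hxy, hxy.symm]
      · simp [hcy, hcx, hεy, hxy, hxy.symm]
      · simp [hcx, hcy, hxy, hxy.symm]
    · refine ⟨y, x, h, ?_⟩
      rw [hkey]
      funext c
      simp only [Pi.add_apply, eVec]
      by_cases hcx : c = x <;> by_cases hcy : c = y
      · exact absurd (hcx.symm.trans hcy) hxy
      · simp [hcx, hcy, hεx', hxy, hxy.symm]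
      · simp [hcy, hcx, hεy, hxy, hxy.symm]
      · simp [hcx, hcy, hxy, hxy.symm]
  · -- both plus: x < y, root = e_x - e_y
    have hxy' : x < y := by
      rcases lt_trichotomy x y with h | h | h
      · exact h
      · exact absurd h hxy
      · exact absurd hvab (not_lt_of_gt (vnat_mono_notmem n S y x hyS hxS h))
    have hεx' : ¬ (ε x = -1) := by
      rcases hε x with h | h
      · rw [h]; norm_num
      · exact absurd ((mem_minusSet n ε x).mpr h) hxS
    have hεy' : ¬ (ε y = -1) := by
      rcases hε y with h | h
      · rw [h]; norm_num
      · exact absurd ((mem_minusSet n ε y).mpr h) hyS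
    left
    refine ⟨x, y, hxy', ?_⟩
    rw [hkey]
    funext c
    simp only [Pi.sub_apply, eVec]
    by_cases hcx : c = x <;> by_cases hcy : c = y
    · exact absurd (hcx.symm.trans hcy) hxy
    · simp [hcx, hcy, hεx', hxy, hxy.symm]
    · simp [hcy, hcx, hεy', hxy, hxy.symm]
    · simp [hcx, hcy, hxy, hxy.symm]

lemma not_posRoot (n j : ℕ) (hj : j + 1 < n) :
    ¬ isPosRoot n (eVec n ⟨j + 1, hj⟩ - eVec n ⟨j, Nat.lt_of_succ_lt hj⟩) := by
  have hne : (⟨j, by omega⟩ : Fin n) ≠ ⟨j + 1, hj⟩ := by simp [Fin.ext_iff]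
  have hne' : (⟨j + 1, hj⟩ : Fin n) ≠ ⟨j, by omega⟩ := by simp [Fin.ext_iff]
  rintro (⟨a, b, hab, h⟩ | ⟨a, b, hab, h⟩ | ⟨a, h⟩)
  · have h1 := congrFun h ⟨j, by omega⟩
    have h2 := congrFun h ⟨j + 1, hj⟩
    have hab' : (a : ℕ) < (b : ℕ) := hab
    simp only [Pi.sub_apply, eVec, if_pos rfl, if_neg hne, if_neg hne'] at h1 h2
    split_ifs at h1 h2 <;> try (exfalso; norm_num at h1) <;> try (exfalso; norm_num at h2)
    all_goals (exfalso; simp only [Fin.ext_iff, Fin.val_mk] at *; omega)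
  · have h1 := congrFun h ⟨j, by omega⟩
    simp only [Pi.sub_apply, Pi.add_apply, eVec, if_pos rfl, if_neg hne] at h1
    split_ifs at h1 <;> norm_num at h1
  · have h1 := congrFun h ⟨j, by omega⟩
    simp only [Pi.sub_apply, eVec, if_pos rfl, if_neg hne] at h1
    split_ifs at h1 <;> norm_num at h1

lemma sEquiv_root (n j : ℕ) (hj : j + 1 < n) :
    sEquiv n ⟨j, Nat.lt_of_succ_lt hj⟩ (eVec n ⟨j, Nat.lt_of_succ_lt hj⟩ - eVec n ⟨j + 1, hj⟩) =
      eVec n ⟨j + 1, hj⟩ - eVec n ⟨j, Nat.lt_of_succ_lt hj⟩ := by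
  funext c
  rw [sEquiv_apply_swap' n ⟨j, by omega⟩ (by simpa using hj)]
  simp only [Pi.sub_apply, eVec]
  by_cases h1 : c = ⟨j, by omega⟩ <;> by_cases h2 : (c : ℕ) = j + 1 <;>
    simp_all [Fin.ext_iff]

lemma wE_plus_root (n : ℕ) (ε : Fin n → ℤ) (J J1 : Fin n) (hne : J ≠ J1)
    (hJ : ε J ≠ -1) (hJ1 : ε J1 ≠ -1) :
    wE n ε (eVec n (vFin n (minusSet n ε) J) - eVec n (vFin n (minusSet n ε) J1)) =
      eVec n J - eVec n J1 := by
  rw [wE_root n ε J J1 hne]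
  funext c
  simp only [Pi.sub_apply, eVec]
  by_cases hc1 : c = J <;> by_cases hc2 : c = J1
  · exact absurd (hc1.symm.trans hc2) hne
  · simp [hc1, hc2, hJ, hne, hne.symm]
  · simp [hc1, hc2, hJ1, hne, hne.symm]
  · simp [hc1, hc2]

lemma wE_minus_root (n : ℕ) (ε : Fin n → ℤ) (J J1 : Fin n) (hne : J ≠ J1)
    (hJ : ε J = -1) (hJ1 : ε J1 = -1) :
    wE n ε (eVec n (vFin n (minusSet n ε) J1) - eVec n (vFin n (minusSet n ε) J)) =
      eVec n J - eVec n J1 := by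
  rw [wE_root n ε J1 J hne.symm]
  funext c
  simp only [Pi.sub_apply, eVec]
  by_cases hc1 : c = J <;> by_cases hc2 : c = J1
  · exact absurd (hc1.symm.trans hc2) hne
  · simp [hc1, hc2, hJ, hne, hne.symm]
  · simp [hc1, hc2, hJ1, hne, hne.symm]
  · simp [hc1, hc2]

lemma not_minRep_of_eq (n : ℕ) (ε : Fin n → ℤ) (hε : ∀ i, ε i = 1 ∨ ε i = -1)
    (j : ℕ) (hj : j + 1 < n) (heq : ε ⟨j, Nat.lt_of_succ_lt hj⟩ = ε ⟨j + 1, hj⟩) :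
    ¬ isMinRep n (sEquiv n ⟨j, Nat.lt_of_succ_lt hj⟩ * wE n ε) := by
  classical
  intro hmin
  have hJJ1 : (⟨j, by omega⟩ : Fin n) ≠ ⟨j + 1, hj⟩ := by simp [Fin.ext_iff]
  have hJlt : (⟨j, by omega⟩ : Fin n) < ⟨j + 1, hj⟩ := by simp [Fin.lt_def]
  have hroot : ∃ a b : Fin n, a < b ∧
      wE n ε (eVec n a - eVec n b) =
        eVec n ⟨j, by omega⟩ - eVec n ⟨j + 1, hj⟩ := by
    rcases hε ⟨j, by omega⟩ with hsg | hsg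
    · have hsg1 : ε ⟨j + 1, hj⟩ = 1 := heq ▸ hsg
      have hJ' : ε (⟨j, by omega⟩ : Fin n) ≠ -1 := by rw [hsg]; norm_num
      have hJ1' : ε (⟨j + 1, hj⟩ : Fin n) ≠ -1 := by rw [hsg1]; norm_num
      have hJS : (⟨j, by omega⟩ : Fin n) ∉ minusSet n ε :=
        fun hc => hJ' ((mem_minusSet n ε _).mp hc)
      have hJ1S : (⟨j + 1, hj⟩ : Fin n) ∉ minusSet n ε :=
        fun hc => hJ1' ((mem_minusSet n ε _).mp hc)
      exact ⟨_, _, vnat_mono_notmem n (minusSet n ε) _ _ hJS hJ1S hJlt,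
        wE_plus_root n ε _ _ hJJ1 hJ' hJ1'⟩
    · have hsg1 : ε ⟨j + 1, hj⟩ = -1 := heq ▸ hsg
      have hJS : (⟨j, by omega⟩ : Fin n) ∈ minusSet n ε := (mem_minusSet n ε _).mpr hsg
      have hJ1S : (⟨j + 1, hj⟩ : Fin n) ∈ minusSet n ε := (mem_minusSet n ε _).mpr hsg1
      exact ⟨_, _, vnat_anti_mem n (minusSet n ε) _ _ hJS hJ1S hJlt,
        wE_minus_root n ε _ _ hJJ1 hsg hsg1⟩
  obtain ⟨a, b, hab, hr⟩ := hroot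
  have hpr := hmin a b hab
  rw [Equiv.Perm.mul_apply, hr, sEquiv_root n j hj] at hpr
  exact not_posRoot n j hj hpr

lemma card_filter_invol (n : ℕ) (S S' : Finset (Fin n)) (σ : Fin n → Fin n)
    (hσ : ∀ z, σ (σ z) = z) (hmem : ∀ z, z ∈ S' ↔ σ z ∈ S) (p : Fin n → Prop)
    [DecidablePred p] :
    (S'.filter p).card = (S.filter (fun z => p (σ z))).card := by
  classical
  apply Finset.card_nbij (i := σ)
  · intro z hz
    rw [Finset.mem_coe, Finset.mem_filter] at hz
    rw [Finset.mem_coe, Finset.mem_filter]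
    exact ⟨(hmem z).mp hz.1, by rw [hσ]; exact hz.2⟩
  · intro z _ w _ h
    have := congrArg σ h
    rwa [hσ, hσ] at this
  · intro w hw
    rw [Finset.mem_coe, Finset.mem_filter] at hw
    refine ⟨σ w, ?_, hσ w⟩
    rw [Finset.mem_coe, Finset.mem_filter]
    exact ⟨(hmem (σ w)).mpr (by rw [hσ]; exact hw.1), hw.2⟩

lemma vnat_swap (n : ℕ) (S S' : Finset (Fin n)) (a b : Fin n) (j : ℕ)
    (ha : (a : ℕ) = j) (hb : (b : ℕ) = j + 1) (hjn : j + 1 < n)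
    (hone : (a ∈ S ∧ b ∉ S) ∨ (a ∉ S ∧ b ∈ S))
    (hma : a ∈ S' ↔ b ∈ S) (hmb : b ∈ S' ↔ a ∈ S)
    (hmo : ∀ z : Fin n, z ≠ a → z ≠ b → (z ∈ S' ↔ z ∈ S)) (c : Fin n) :
    vnat n S' c = vnat n S (if c = a then b else if c = b then a else c) := by
  classical
  have hva : ∀ z : Fin n, z = a ↔ (z : ℕ) = j := fun z => by rw [Fin.ext_iff, ha]
  have hvb : ∀ z : Fin n, z = b ↔ (z : ℕ) = j + 1 := fun z => by rw [Fin.ext_iff, hb]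
  have hab : a ≠ b := fun h => by rw [hvb] at h; omega
  set σ : Fin n → Fin n := fun z => if z = a then b else if z = b then a else z with hσdef
  have hσa : σ a = b := by simp [hσdef]
  have hσb : σ b = a := by simp [hσdef, hab.symm]
  have hσo : ∀ z, z ≠ a → z ≠ b → σ z = z := by intro z h1 h2; simp [hσdef, h1, h2]
  have hσ : ∀ z, σ (σ z) = z := by
    intro z
    by_cases h1 : z = a
    · rw [h1, hσa, hσb]
    · by_cases h2 : z = b
      · rw [h2, hσb, hσa]
      · rw [hσo z h1 h2, hσo z h1 h2]
  have hmem : ∀ z, z ∈ S' ↔ σ z ∈ S := by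
    intro z
    by_cases h1 : z = a
    · rw [h1, hσa]; exact hma
    · by_cases h2 : z = b
      · rw [h2, hσb]; exact hmb
      · rw [hσo z h1 h2]; exact hmo z h1 h2
  have hcard := fun (p : Fin n → Prop) (hp : DecidablePred p) =>
    @card_filter_invol n S S' σ hσ hmem p hp
  by_cases hc1 : c = a
  · -- c = a, target vnat S b
    rw [if_pos hc1, hc1]
    rcases hone with ⟨haS, hbS⟩ | ⟨haS, hbS⟩
    · -- a ∈ S, b ∉ S; a ∉ S'
      have haS' : a ∉ S' := fun h => hbS (hma.mp h)
      rw [vnat, vnat, if_neg haS', if_neg hbS]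
      rw [hcard (· < a) inferInstance]
      have hset : S.filter (fun z => σ z < a) = S.filter (· < b) \ {a} := by
        ext z
        rw [Finset.mem_sdiff, Finset.mem_filter, Finset.mem_filter, Finset.mem_singleton]
        constructor
        · rintro ⟨hz, hza⟩
          by_cases h1 : z = a
          · rw [h1, hσa] at hza
            have : (b : ℕ) < (a : ℕ) := hza
            omega
          · by_cases h2 : z = b
            · exact absurd (h2 ▸ hz) hbS
            · rw [hσo z h1 h2] at hza
              have hza' : (z : ℕ) < (a : ℕ) := hza
              refine ⟨⟨hz, ?_⟩, h1⟩
              show (z : ℕ) < (b : ℕ)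
              omega
        · rintro ⟨⟨hz, hzb⟩, hzna⟩
          refine ⟨hz, ?_⟩
          have h2 : z ≠ b := fun hc => hbS (hc ▸ hz)
          have hzb' : (z : ℕ) < (b : ℕ) := hzb
          have h1' : (z : ℕ) ≠ j := fun hc => hzna ((hva z).mpr hc)
          rw [hσo z hzna h2]
          show (z : ℕ) < (a : ℕ)
          omega
      have hain : a ∈ S.filter (· < b) := by
        rw [Finset.mem_filter]
        exact ⟨haS, show (a : ℕ) < (b : ℕ) by omega⟩
      rw [hset, Finset.card_sdiff_of_subset (by simpa using hain)]
      have hbnd : (S.filter (· < b)).card ≤ j + 1 := by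
        apply card_le_of_mem_Ico n _ 0 (j + 1)
        intro z hz
        rw [Finset.mem_filter] at hz
        have : (z : ℕ) < (b : ℕ) := hz.2
        exact ⟨Nat.zero_le _, by omega⟩
      have hpos : 0 < (S.filter (· < b)).card := Finset.card_pos.mpr ⟨a, hain⟩
      simp only [Finset.card_singleton]
      omega
    · -- a ∉ S, b ∈ S; a ∈ S'
      have haS' : a ∈ S' := hma.mpr hbS
      rw [vnat, vnat, if_pos haS', if_pos hbS]
      rw [hcard (· ≤ a) inferInstance]
      congr 2
      apply Finset.filter_congr
      intro z hz
      by_cases h1 : z = a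
      · exact absurd (h1 ▸ hz) haS
      · by_cases h2 : z = b
        · rw [h2, hσb]
          constructor <;> intro h <;> [exact le_refl b; exact le_refl a]
        · rw [hσo z h1 h2]
          have h1' : (z : ℕ) ≠ j := fun hc => h1 ((hva z).mpr hc)
          have h2' : (z : ℕ) ≠ j + 1 := fun hc => h2 ((hvb z).mpr hc)
          constructor <;> intro h <;> [skip; skip] <;>
            [ (have h' : (z : ℕ) ≤ (a : ℕ) := h; show (z : ℕ) ≤ (b : ℕ); omega);
              (have h' : (z : ℕ) ≤ (b : ℕ) := h; show (z : ℕ) ≤ (a : ℕ); omega)]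
  · by_cases hc2 : c = b
    · -- c = b, target vnat S a
      rw [if_neg hc1, if_pos hc2, hc2]
      rcases hone with ⟨haS, hbS⟩ | ⟨haS, hbS⟩
      · -- a ∈ S, b ∉ S; b ∈ S'
        have hbS' : b ∈ S' := hmb.mpr haS
        rw [vnat, vnat, if_pos hbS', if_pos haS]
        rw [hcard (· ≤ b) inferInstance]
        congr 2
        apply Finset.filter_congr
        intro z hz
        by_cases h1 : z = a
        · rw [h1, hσa]
          constructor <;> intro h <;> [exact le_refl a; exact le_refl b]
        · by_cases h2 : z = b
          · exact absurd (h2 ▸ hz) hbS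
          · rw [hσo z h1 h2]
            have h1' : (z : ℕ) ≠ j := fun hc => h1 ((hva z).mpr hc)
            have h2' : (z : ℕ) ≠ j + 1 := fun hc => h2 ((hvb z).mpr hc)
            constructor <;> intro h <;>
              [ (have h' : (z : ℕ) ≤ (b : ℕ) := h; show (z : ℕ) ≤ (a : ℕ); omega);
                (have h' : (z : ℕ) ≤ (a : ℕ) := h; show (z : ℕ) ≤ (b : ℕ); omega)]
      · -- a ∉ S, b ∈ S; b ∉ S'
        have hbS' : b ∉ S' := fun h => haS (hmb.mp h)
        rw [vnat, vnat, if_neg hbS', if_neg haS]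
        rw [hcard (· < b) inferInstance]
        have hset : S.filter (fun z => σ z < b) = insert b (S.filter (· < a)) := by
          ext z
          rw [Finset.mem_insert, Finset.mem_filter, Finset.mem_filter]
          constructor
          · rintro ⟨hz, hzb⟩
            by_cases h2 : z = b
            · exact Or.inl h2
            · have h1 : z ≠ a := fun hc => haS (hc ▸ hz)
              rw [hσo z h1 h2] at hzb
              refine Or.inr ⟨hz, ?_⟩
              have h1' : (z : ℕ) ≠ j := fun hc => h1 ((hva z).mpr hc)
              have h2' : (z : ℕ) ≠ j + 1 := fun hc => h2 ((hvb z).mpr hc)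
              have hzb' : (z : ℕ) < (b : ℕ) := hzb
              show (z : ℕ) < (a : ℕ)
              omega
          · rintro (h0 | ⟨hz, hza⟩)
            · rw [h0, hσb]
              exact ⟨hbS, show (a : ℕ) < (b : ℕ) by omega⟩
            · have hza' : (z : ℕ) < (a : ℕ) := hza
              have h1 : z ≠ a := fun hc => haS (hc ▸ hz)
              have h2 : z ≠ b := fun hc => by rw [hvb] at hc; omega
              refine ⟨hz, ?_⟩
              rw [hσo z h1 h2]
              show (z : ℕ) < (b : ℕ)
              omega
        have hnotin : b ∉ S.filter (· < a) := by
          rw [Finset.mem_filter]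
          rintro ⟨-, hlt⟩
          have : (b : ℕ) < (a : ℕ) := hlt
          omega
        rw [hset, Finset.card_insert_of_notMem hnotin]
        have hbnd : (S.filter (· < a)).card ≤ j := by
          apply card_le_of_mem_Ico n _ 0 j
          intro z hz
          rw [Finset.mem_filter] at hz
          have : (z : ℕ) < (a : ℕ) := hz.2
          exact ⟨Nat.zero_le _, by omega⟩
        omega
    · -- c ∉ {a, b}
      rw [if_neg hc1, if_neg hc2]
      have hca : (c : ℕ) ≠ j := fun hc => hc1 ((hva c).mpr hc)
      have hcb : (c : ℕ) ≠ j + 1 := fun hc => hc2 ((hvb c).mpr hc)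
      have hmemc : c ∈ S' ↔ c ∈ S := hmo c hc1 hc2
      rw [vnat, vnat, if_congr hmemc rfl rfl]
      by_cases hcS : c ∈ S
      · rw [if_pos hcS, if_pos hcS, hcard (· ≤ c) inferInstance]
        congr 2
        apply Finset.filter_congr
        intro z hz
        by_cases h1 : z = a
        · rw [h1, hσa]
          constructor <;> intro h <;>
            [ (have h' : (b : ℕ) ≤ (c : ℕ) := h; show (a : ℕ) ≤ (c : ℕ); omega);
              (have h' : (a : ℕ) ≤ (c : ℕ) := h; show (b : ℕ) ≤ (c : ℕ); omega)]
        · by_cases h2 : z = b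
          · rw [h2, hσb]
            constructor <;> intro h <;>
              [ (have h' : (a : ℕ) ≤ (c : ℕ) := h; show (b : ℕ) ≤ (c : ℕ); omega);
                (have h' : (b : ℕ) ≤ (c : ℕ) := h; show (a : ℕ) ≤ (c : ℕ); omega)]
          · rw [hσo z h1 h2]
      · rw [if_neg hcS, if_neg hcS, hcard (· < c) inferInstance]
        congr 2
        apply Finset.filter_congr
        intro z hz
        by_cases h1 : z = a
        · rw [h1, hσa]
          constructor <;> intro h <;>
            [ (have h' : (b : ℕ) < (c : ℕ) := h; show (a : ℕ) < (c : ℕ); omega);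
              (have h' : (a : ℕ) < (c : ℕ) := h; show (b : ℕ) < (c : ℕ); omega)]
        · by_cases h2 : z = b
          · rw [h2, hσb]
            constructor <;> intro h <;>
              [ (have h' : (a : ℕ) < (c : ℕ) := h; show (b : ℕ) < (c : ℕ); omega);
                (have h' : (b : ℕ) < (c : ℕ) := h; show (a : ℕ) < (c : ℕ); omega)]
          · rw [hσo z h1 h2]

lemma vnat_flip (n : ℕ) (S S' : Finset (Fin n)) (l : Fin n) (hl : (l : ℕ) = n - 1)
    (hml : l ∈ S' ↔ l ∉ S) (hmo : ∀ z : Fin n, z ≠ l → (z ∈ S' ↔ z ∈ S)) (c : Fin n) :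
    vnat n S' c = vnat n S c := by
  classical
  have hn : 0 < n := Fin.pos l
  have hXeq : S'.filter (· < l) = S.filter (· < l) := by
    ext z
    rw [Finset.mem_filter, Finset.mem_filter]
    constructor
    · rintro ⟨hz, hzl⟩
      have hzl' : (z : ℕ) < (l : ℕ) := hzl
      exact ⟨(hmo z (fun hc => by rw [hc] at hzl'; omega)).mp hz, hzl⟩
    · rintro ⟨hz, hzl⟩
      have hzl' : (z : ℕ) < (l : ℕ) := hzl
      exact ⟨(hmo z (fun hc => by rw [hc] at hzl'; omega)).mpr hz, hzl⟩
  have hbnd : (S.filter (· < l)).card ≤ n - 1 := by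
    apply card_le_of_mem_Ico n _ 0 (n - 1)
    intro z hz
    rw [Finset.mem_filter] at hz
    have : (z : ℕ) < (l : ℕ) := hz.2
    exact ⟨Nat.zero_le _, by omega⟩
  have hnotinX : l ∉ S.filter (· < l) := by
    rw [Finset.mem_filter]
    rintro ⟨-, hlt⟩
    exact absurd hlt (lt_irrefl l)
  by_cases hc : c = l
  · rw [hc]
    by_cases hlS : l ∈ S
    · have hlS' : l ∉ S' := fun h => (hml.mp h) hlS
      rw [vnat, vnat, if_neg hlS', if_pos hlS]
      have hSfull : S.filter (· ≤ l) = insert l (S.filter (· < l)) := by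
        ext z
        rw [Finset.mem_insert, Finset.mem_filter, Finset.mem_filter]
        constructor
        · rintro ⟨hz, hzl⟩
          by_cases h1 : z = l
          · exact Or.inl h1
          · have h1' : (z : ℕ) ≠ (l : ℕ) := fun hcc => h1 (Fin.ext hcc)
            have hzl' : (z : ℕ) ≤ (l : ℕ) := hzl
            exact Or.inr ⟨hz, show (z : ℕ) < (l : ℕ) by omega⟩
        · rintro (h0 | ⟨hz, hzl⟩)
          · rw [h0]
            exact ⟨hlS, le_refl l⟩
          · have hzl' : (z : ℕ) < (l : ℕ) := hzl
            exact ⟨hz, show (z : ℕ) ≤ (l : ℕ) by omega⟩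
      rw [hSfull, Finset.card_insert_of_notMem hnotinX, hXeq]
      omega
    · have hlS' : l ∈ S' := hml.mpr hlS
      rw [vnat, vnat, if_pos hlS', if_neg hlS]
      have hSfull : S'.filter (· ≤ l) = insert l (S'.filter (· < l)) := by
        ext z
        rw [Finset.mem_insert, Finset.mem_filter, Finset.mem_filter]
        constructor
        · rintro ⟨hz, hzl⟩
          by_cases h1 : z = l
          · exact Or.inl h1
          · have h1' : (z : ℕ) ≠ (l : ℕ) := fun hcc => h1 (Fin.ext hcc)
            have hzl' : (z : ℕ) ≤ (l : ℕ) := hzl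
            exact Or.inr ⟨hz, show (z : ℕ) < (l : ℕ) by omega⟩
        · rintro (h0 | ⟨hz, hzl⟩)
          · rw [h0]
            exact ⟨hlS', le_refl l⟩
          · have hzl' : (z : ℕ) < (l : ℕ) := hzl
            exact ⟨hz, show (z : ℕ) ≤ (l : ℕ) by omega⟩
      have hnotinX' : l ∉ S'.filter (· < l) := by
        rw [Finset.mem_filter]
        rintro ⟨-, hlt⟩
        exact absurd hlt (lt_irrefl l)
      rw [hSfull, Finset.card_insert_of_notMem hnotinX', hXeq]
      omega
  · have hc' : (c : ℕ) < n - 1 := by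
      have h1 : (c : ℕ) ≠ (l : ℕ) := fun hcc => hc (Fin.ext hcc)
      have := c.isLt
      omega
    have hmemc : c ∈ S' ↔ c ∈ S := hmo c hc
    have hfle : S'.filter (· ≤ c) = S.filter (· ≤ c) := by
      ext z
      rw [Finset.mem_filter, Finset.mem_filter]
      constructor
      · rintro ⟨hz, hzc⟩
        have hzc' : (z : ℕ) ≤ (c : ℕ) := hzc
        exact ⟨(hmo z (fun h0 => by rw [h0] at hzc'; omega)).mp hz, hzc⟩
      · rintro ⟨hz, hzc⟩
        have hzc' : (z : ℕ) ≤ (c : ℕ) := hzc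
        exact ⟨(hmo z (fun h0 => by rw [h0] at hzc'; omega)).mpr hz, hzc⟩
    have hflt : S'.filter (· < c) = S.filter (· < c) := by
      ext z
      rw [Finset.mem_filter, Finset.mem_filter]
      constructor
      · rintro ⟨hz, hzc⟩
        have hzc' : (z : ℕ) < (c : ℕ) := hzc
        exact ⟨(hmo z (fun h0 => by rw [h0] at hzc'; omega)).mp hz, hzc⟩
      · rintro ⟨hz, hzc⟩
        have hzc' : (z : ℕ) < (c : ℕ) := hzc
        exact ⟨(hmo z (fun h0 => by rw [h0] at hzc'; omega)).mpr hz, hzc⟩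
    rw [vnat, vnat, if_congr hmemc rfl rfl, hfle, hflt]

lemma swap_eq (n : ℕ) (ε : Fin n → ℤ) (hε : ∀ i, ε i = 1 ∨ ε i = -1)
    (j : ℕ) (hj : j + 1 < n)
    (hone : (ε ⟨j, Nat.lt_of_succ_lt hj⟩ = 1 ∧ ε ⟨j + 1, hj⟩ = -1) ∨
      (ε ⟨j, Nat.lt_of_succ_lt hj⟩ = -1 ∧ ε ⟨j + 1, hj⟩ = 1)) :
    sEquiv n ⟨j, Nat.lt_of_succ_lt hj⟩ * wE n ε =
      wE n (fun k => if (k : ℕ) = j then ε ⟨j + 1, hj⟩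
        else if (k : ℕ) = j + 1 then ε ⟨j, Nat.lt_of_succ_lt hj⟩ else ε k) := by
  classical
  set ε' : Fin n → ℤ := fun k => if (k : ℕ) = j then ε ⟨j + 1, hj⟩
        else if (k : ℕ) = j + 1 then ε ⟨j, by omega⟩ else ε k with hε'def
  set A : Fin n := ⟨j, by omega⟩ with hA
  set B : Fin n := ⟨j + 1, hj⟩ with hB
  have hvA : (A : ℕ) = j := rfl
  have hvB : (B : ℕ) = j + 1 := rfl
  have hAB : A ≠ B := fun h => by have := congrArg Fin.val h; rw [hvA, hvB] at this; omega
  have hε'A : ε' A = ε B := by simp [hε'def, hvA]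
  have hε'B : ε' B = ε A := by simp [hε'def, hvB]
  have hε'o : ∀ z : Fin n, z ≠ A → z ≠ B → ε' z = ε z := by
    intro z h1 h2
    have h1' : (z : ℕ) ≠ j := fun hc => h1 (Fin.ext hc)
    have h2' : (z : ℕ) ≠ j + 1 := fun hc => h2 (Fin.ext hc)
    simp [hε'def, h1', h2']
  have honeS : (A ∈ minusSet n ε ∧ B ∉ minusSet n ε) ∨
      (A ∉ minusSet n ε ∧ B ∈ minusSet n ε) := by
    rcases hone with ⟨h1, h2⟩ | ⟨h1, h2⟩
    · exact Or.inr ⟨fun hc => by rw [(mem_minusSet n ε A).mp hc] at h1; norm_num at h1,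
        (mem_minusSet n ε B).mpr h2⟩
    · exact Or.inl ⟨(mem_minusSet n ε A).mpr h1,
        fun hc => by rw [(mem_minusSet n ε B).mp hc] at h2; norm_num at h2⟩
  have hma : A ∈ minusSet n ε' ↔ B ∈ minusSet n ε := by
    rw [mem_minusSet, mem_minusSet, hε'A]
  have hmb : B ∈ minusSet n ε' ↔ A ∈ minusSet n ε := by
    rw [mem_minusSet, mem_minusSet, hε'B]
  have hmo : ∀ z : Fin n, z ≠ A → z ≠ B → (z ∈ minusSet n ε' ↔ z ∈ minusSet n ε) := by
    intro z h1 h2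
    rw [mem_minusSet, mem_minusSet, hε'o z h1 h2]
  apply Equiv.ext
  intro f
  funext c
  rw [Equiv.Perm.mul_apply, sEquiv_apply_swap' n A (by rw [hvA]; omega) (wE n ε f) c]
  have harg : (if c = A then (⟨(A : ℕ) + 1, by rw [hvA]; omega⟩ : Fin n)
      else if (c : ℕ) = (A : ℕ) + 1 then A else c) =
      (if c = A then B else if c = B then A else c) := by
    by_cases h1 : c = A
    · rw [if_pos h1, if_pos h1]
    · rw [if_neg h1, if_neg h1]
      by_cases h2 : c = B
      · rw [if_pos (by rw [h2, hvB, hvA]), if_pos h2]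
      · rw [if_neg (fun hc => h2 (Fin.ext (by rw [hvB]; rw [hvA] at hc; omega))), if_neg h2]
  rw [harg, wE_apply, wE_apply]
  have hvnat := vnat_swap n (minusSet n ε) (minusSet n ε') A B j hvA hvB hj honeS hma hmb hmo c
  have hvfin : vFin n (minusSet n ε') c =
      vFin n (minusSet n ε) (if c = A then B else if c = B then A else c) := Fin.ext hvnat
  rw [← hvfin]
  congr 1
  -- sign equality
  by_cases h1 : c = A
  · rw [if_pos h1, h1, hε'A]
  · rw [if_neg h1]
    by_cases h2 : c = B
    · rw [if_pos h2, h2, hε'B]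
    · rw [if_neg h2, hε'o c h1 h2]

lemma flip_eq (n : ℕ) (ε : Fin n → ℤ) (hε : ∀ i, ε i = 1 ∨ ε i = -1) (hn : 0 < n) :
    sEquiv n ⟨n - 1, by omega⟩ * wE n ε =
      wE n (fun k => if (k : ℕ) = n - 1 then -ε k else ε k) := by
  classical
  set ε' : Fin n → ℤ := fun k => if (k : ℕ) = n - 1 then -ε k else ε k with hε'def
  set l : Fin n := ⟨n - 1, by omega⟩ with hl
  have hvl : (l : ℕ) = n - 1 := rfl
  have hε'l : ε' l = -ε l := by simp [hε'def, hvl]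
  have hε'o : ∀ z : Fin n, z ≠ l → ε' z = ε z := by
    intro z h1
    have h1' : (z : ℕ) ≠ n - 1 := fun hc => h1 (Fin.ext hc)
    simp [hε'def, h1']
  have hml : l ∈ minusSet n ε' ↔ l ∉ minusSet n ε := by
    rw [mem_minusSet, mem_minusSet, hε'l]
    rcases hε l with h | h <;> rw [h] <;> norm_num
  have hmo : ∀ z : Fin n, z ≠ l → (z ∈ minusSet n ε' ↔ z ∈ minusSet n ε) := by
    intro z h1
    rw [mem_minusSet, mem_minusSet, hε'o z h1]
  apply Equiv.ext
  intro f
  funext c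
  rw [Equiv.Perm.mul_apply, sEquiv_apply_last n l (by rw [hvl]; omega) (wE n ε f) c]
  have hvnat := vnat_flip n (minusSet n ε) (minusSet n ε') l hvl hml hmo c
  have hvfin : vFin n (minusSet n ε') c = vFin n (minusSet n ε) c := Fin.ext hvnat
  rw [wE_apply, wE_apply, hvfin]
  by_cases h1 : c = l
  · rw [if_pos h1]
    have h2 : ε' c = -ε c := h1 ▸ hε'l
    rcases hε c with h | h <;>
      rw [h2, h] <;> norm_num
  · rw [if_neg h1, hε'o c h1]

/-- For `1 ≤ j < n`, `s_j w_ε` is a minimal coset representative of `W₀/Sₙ` iff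
`(ε_j, ε_{j+1}) ∈ {(+1,-1),(-1,+1)}`, in which case `s_j w_ε = w_{s_j ε}`; and `sₙ w_ε`
always equals `w_{sₙ ε}` and is a minimal coset representative. -/
theorem sj_wE_minRep (n : ℕ) (ε : Fin n → ℤ) (hε : ∀ i, ε i = 1 ∨ ε i = -1)
    (j : ℕ) (hj : j + 1 < n) :
    (isMinRep n (sEquiv n ⟨j, by omega⟩ * wE n ε) ↔
      ((ε ⟨j, by omega⟩ = 1 ∧ ε ⟨j + 1, hj⟩ = -1) ∨
       (ε ⟨j, by omega⟩ = -1 ∧ ε ⟨j + 1, hj⟩ = 1))) ∧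
    (((ε ⟨j, by omega⟩ = 1 ∧ ε ⟨j + 1, hj⟩ = -1) ∨
      (ε ⟨j, by omega⟩ = -1 ∧ ε ⟨j + 1, hj⟩ = 1)) →
      sEquiv n ⟨j, by omega⟩ * wE n ε =
        wE n (fun k => if (k : ℕ) = j then ε ⟨j + 1, hj⟩
          else if (k : ℕ) = j + 1 then ε ⟨j, by omega⟩ else ε k)) ∧
    (sEquiv n ⟨n - 1, by omega⟩ * wE n ε =
        wE n (fun k => if (k : ℕ) = n - 1 then -ε k else ε k) ∧
      isMinRep n (sEquiv n ⟨n - 1, by omega⟩ * wE n ε)) := by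
  constructor
  · constructor
    · -- minRep implies the sign condition
      intro hmin
      by_contra hnc
      have heq : ε ⟨j, by omega⟩ = ε ⟨j + 1, hj⟩ := by
        rcases hε ⟨j, by omega⟩ with h1 | h1 <;> rcases hε ⟨j + 1, hj⟩ with h2 | h2
        · rw [h1, h2]
        · exact absurd (Or.inl ⟨h1, h2⟩) hnc
        · exact absurd (Or.inr ⟨h1, h2⟩) hnc
        · rw [h1, h2]
      exact not_minRep_of_eq n ε hε j hj heq hmin
    · -- sign condition implies minRep
      intro hone
      rw [swap_eq n ε hε j hj hone]
      apply wE_isMinRep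
      intro k
      by_cases h1 : (k : ℕ) = j
      · simp only [if_pos h1]
        exact hε _
      · by_cases h2 : (k : ℕ) = j + 1
        · simp only [if_neg h1, if_pos h2]
          exact hε _
        · simp only [if_neg h1, if_neg h2]
          exact hε k
  constructor
  · exact fun hone => swap_eq n ε hε j hj hone
  constructor
  · exact flip_eq n ε hε (by omega)
  · rw [flip_eq n ε hε (by omega)]
    apply wE_isMinRep
    intro k
    by_cases h1 : (k : ℕ) = n - 1
    · simp only [if_pos h1]
      rcases hε k with h | h <;> rw [h] <;> norm_num
    · simp only [if_neg h1]
      exact hε k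
end

section
/- Let γ = (ξ+(n−1)κ, ξ+(n−3)κ, …, ξ+(1−n)κ) ∈ ℂⁿ, let ε ∈ {±1}ⁿ, and let ε^{(n)} be ε with last entry replaced by +1. Then (αₙ, w_{ε^{(n)}} γ) = ξ − κ(ε₁ + ε₂ + ⋯ + ε_{n−1}), where αₙ = eₙ. -/
/-!
`chainE n i = sᵢ ⋯ sₙ` fixes the coordinates below `i` and moves the coordinate at `q - 1` to
`q` for every `q > i`. Reading off the last coordinate of `w_ε γ` from the outermost factor
inwards, the chains start at `i_k > ⋯ > i₁`, each strictly below the coordinate being tracked,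
so every factor lowers that coordinate by one: the last coordinate of `w_{ε⁽ⁿ⁾} γ` is
`γ_{n-1-k}`, where `k` counts the `-1`s among `ε₁, …, ε_{n-1}`. Since
`ε₁ + ⋯ + ε_{n-1} = (n - 1) - 2k`, this is `ξ + (2k - (n - 1))κ`.
-/

namespace List

lemma filter_le_finRange_eq_cons {n : ℕ} (i : Fin n) :
    (finRange n).filter (fun j => decide (i ≤ j)) =
      i :: (finRange n).filter (fun j => decide (i < j)) := by
  have hsorted := (sortedLT_finRange n).pairwise
  refine (hsorted.filter _).eq_of_mem_iff ?_ fun j => ?_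
  · exact pairwise_cons.2 ⟨fun j hj => by simpa using (mem_filter.1 hj).2, hsorted.filter _⟩
  · simp only [mem_filter, mem_finRange, true_and, decide_eq_true_eq, mem_cons]
    exact le_iff_eq_or_lt.trans (or_congr_left eq_comm)

end List

section Chain

variable {n : ℕ}

lemma sEquiv_apply_of_ne (i k : Fin n) (hki : k ≠ i) (hk : (k : ℕ) ≠ i + 1) (v : Fin n → ℂ) :
    sEquiv n i v k = v k := by
  unfold sEquiv
  split_ifs with h
  · have hk' : k ≠ ⟨i + 1, h⟩ := fun e => hk (congrArg Fin.val e)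
    simp [Equiv.arrowCongr, Equiv.swap_apply_of_ne_of_ne hki hk']
  · simp [hki]

lemma sEquiv_apply_succ (i : Fin n) (h : (i : ℕ) + 1 < n) (v : Fin n → ℂ) :
    sEquiv n i v ⟨i + 1, h⟩ = v i := by
  simp [sEquiv, h, Equiv.arrowCongr]

lemma chainE_eq_sEquiv_mul (i : Fin n) :
    chainE n i =
      sEquiv n i * (((List.finRange n).filter (fun j => decide (i < j))).map (sEquiv n)).prod := by
  rw [chainE, List.filter_le_finRange_eq_cons, List.map_cons, List.prod_cons]

lemma chainE_eq_sEquiv_mul_chainE (i : Fin n) (h : (i : ℕ) + 1 < n) :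
    chainE n i = sEquiv n i * chainE n ⟨i + 1, h⟩ := by
  rw [chainE_eq_sEquiv_mul, chainE]
  -- on `Fin n`, `i < j` unfolds to `⟨i + 1, h⟩ ≤ j`
  congr 4

lemma chainE_eq_sEquiv (i : Fin n) (h : ¬ (i : ℕ) + 1 < n) : chainE n i = sEquiv n i := by
  have hnil : (List.finRange n).filter (fun j => decide (i < j)) = [] :=
    List.filter_eq_nil_iff.2 fun j _ => by simp only [decide_eq_true_eq, Fin.lt_def]; omega
  rw [chainE_eq_sEquiv_mul, hnil, List.map_nil, List.prod_nil, mul_one]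

lemma chainE_apply_of_lt (i k : Fin n) (hk : k < i) (v : Fin n → ℂ) : chainE n i v k = v k := by
  have hki : k ≠ i := hk.ne
  have hk' : (k : ℕ) ≠ i + 1 := by omega
  by_cases h : (i : ℕ) + 1 < n
  · rw [chainE_eq_sEquiv_mul_chainE i h, Equiv.Perm.mul_apply, sEquiv_apply_of_ne i k hki hk',
      chainE_apply_of_lt _ k (Fin.lt_def.2 (show (k : ℕ) < i + 1 by omega))]
  · rw [chainE_eq_sEquiv i h, sEquiv_apply_of_ne i k hki hk']
termination_by n - i

lemma chainE_apply_of_gt (i q : Fin n) (hq : i < q) (v : Fin n → ℂ) :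
    chainE n i v q = v ⟨q - 1, (Nat.sub_le _ _).trans_lt q.isLt⟩ := by
  have h : (i : ℕ) + 1 < n := by omega
  rw [chainE_eq_sEquiv_mul_chainE i h, Equiv.Perm.mul_apply]
  by_cases hq' : (q : ℕ) = i + 1
  · obtain rfl : q = ⟨i + 1, h⟩ := Fin.ext hq'
    rw [sEquiv_apply_succ i h, chainE_apply_of_lt _ i (Fin.lt_def.2 (by simp))]
    simp
  · rw [sEquiv_apply_of_ne i q hq.ne' hq',
      chainE_apply_of_gt _ q (Fin.lt_def.2 (show (i : ℕ) + 1 < q by omega))]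
termination_by n - i

lemma prod_map_chainE_apply (L : List (Fin n)) (hL : L.Pairwise (· > ·)) (p : ℕ) (hp : p < n)
    (hLp : ∀ i ∈ L, (i : ℕ) < p) (v : Fin n → ℂ) :
    (L.map (chainE n)).prod v ⟨p, hp⟩ = v ⟨p - L.length, by omega⟩ := by
  induction L generalizing p with
  | nil => simp
  | cons i L ih =>
    obtain ⟨hiL, hL⟩ := List.pairwise_cons.1 hL
    have hip : (i : ℕ) < p := hLp i List.mem_cons_self
    rw [List.map_cons, List.prod_cons, Equiv.Perm.mul_apply,
      chainE_apply_of_gt i ⟨p, hp⟩ (Fin.lt_def.2 hip),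
      ih hL (p - 1) _ fun j hj => by have := Fin.lt_def.1 (hiL j hj); omega]
    simp only [List.length_cons, Nat.sub_add_eq, Nat.sub_right_comm]

end Chain

lemma Finset.sum_intCast_of_forall_eq_one_or_eq_neg_one {ι R : Type*} [Ring R] (s : Finset ι)
    (ε : ι → ℤ) (hε : ∀ j ∈ s, ε j = 1 ∨ ε j = -1) :
    ∑ j ∈ s, (ε j : R) = s.card - 2 * (s.filter (fun j => ε j = -1)).card := by
  have hsign : ∀ j ∈ s, (ε j : R) = 1 - 2 * if ε j = -1 then 1 else 0 := fun j hj => by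
    rcases hε j hj with h | h <;> norm_num [h]
  rw [Finset.sum_congr rfl hsign, Finset.sum_sub_distrib, ← Finset.mul_sum, Finset.sum_boole]
  simp

lemma List.length_filter_finRange {n : ℕ} (p : Fin n → Prop) [DecidablePred p] :
    ((finRange n).filter (fun j => decide (p j))).length = (Finset.univ.filter p).card := by
  rw [← toFinset_card_of_nodup ((nodup_finRange n).filter _), toFinset_filter, toFinset_finRange]
  simp only [decide_eq_true_eq]

/-- Let `γ = (ξ+(n-1)κ, ξ+(n-3)κ, …, ξ+(1-n)κ)`, let `ε ∈ {±1}ⁿ`, and let `ε⁽ⁿ⁾` be `ε`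
with last entry replaced by `+1`. Then
`(αₙ, w_{ε⁽ⁿ⁾} γ) = ξ - κ(ε₁ + ⋯ + ε_{n-1})` where `αₙ = eₙ`. -/
theorem pairing_alpha_n_wE_gamma (n : ℕ) (hn : 1 ≤ n) (κ ξ : ℂ)
    (ε : Fin n → ℤ) (hε : ∀ j, ε j = 1 ∨ ε j = -1) :
    let γ : Fin n → ℂ := fun j => ξ + ((n : ℂ) - 1 - 2 * ((j : ℕ) : ℂ)) * κ
    let ε' : Fin n → ℤ := fun j => if (j : ℕ) = n - 1 then 1 else ε j
    wE n ε' γ ⟨n - 1, by omega⟩ =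
      ξ - κ * ∑ j ∈ Finset.univ.filter (fun j : Fin n => (j : ℕ) < n - 1), ((ε j : ℂ)) := by
  intro γ ε'
  set T := Finset.univ.filter (fun j : Fin n => (j : ℕ) < n - 1)
  set L := ((List.finRange n).filter (fun i => decide (ε' i = -1))).reverse
  have hL : L.Pairwise (· > ·) :=
    List.pairwise_reverse.2 ((List.sortedLT_finRange n).pairwise.filter _)
  have hLlt : ∀ i ∈ L, (i : ℕ) < n - 1 := fun i hi => by
    have hi' : ε' i = -1 := by simpa [L] using hi
    by_contra h
    simp [ε', show (i : ℕ) = n - 1 by omega] at hi'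
  have hlen : L.length = (T.filter (fun j => ε j = -1)).card := by
    rw [List.length_reverse, List.length_filter_finRange, Finset.filter_filter]
    congr 1
    refine Finset.filter_congr fun j _ => ?_
    by_cases hj : (j : ℕ) = n - 1 <;> simp [ε', hj]
    omega
  have hT : T.card = n - 1 := by
    rw [Fin.card_filter_val_lt]
    omega
  have hcard : (T.filter (fun j => ε j = -1)).card ≤ n - 1 := hT ▸ Finset.card_filter_le _ _
  rw [show wE n ε' = (L.map (chainE n)).prod from rfl, prod_map_chainE_apply L hL _ _ hLlt,
    Finset.sum_intCast_of_forall_eq_one_or_eq_neg_one T ε fun j _ => hε j, hT]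
  simp only [γ, hlen]
  push_cast [Nat.cast_sub hn, Nat.cast_sub hcard]
  ring
end

section
/- The K-matrix K(z) := k(z)·[[q^ζ−q^{−ζ}+(q^υ−q^{−υ})q^z, 1−q^{2z}],[1−q^{2z}, (q^ζ−q^{−ζ})q^{2z}+(q^υ−q^{−υ})q^z]] with k(z) = q^{−ζ}/((1−q^{−ζ−υ+z})(1+q^{−ζ+υ+z})) satisfies the boundary unitarity relation K(z)K(−z) = Id on ℂ². -/
/-!
Put `a = q^ζ`, `b = q^υ`, `w = q^z`. Then `K(z) = k(z) M(w)` for a matrix `M(w)` polynomial in `w`,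
and `K(-z) = k(-z) M(w⁻¹)`. The off-diagonal entries of `M(w) M(w⁻¹)` cancel, so it is a scalar
matrix, and its scalar factors as `a² (1 - w/ab)(1 + bw/a)(1 - 1/abw)(1 + b/aw)`, which is exactly
`(k(z) k(-z))⁻¹`.
-/

/-- The scalar function `k(z) = q^{-ζ}/((1-q^{-ζ-υ+z})(1+q^{-ζ+υ+z}))`. -/
noncomputable def kfun (q : ℝ) (ζ υ z : ℂ) : ℂ :=
  (q : ℂ) ^ (-ζ) / ((1 - (q : ℂ) ^ (-ζ - υ + z)) * (1 + (q : ℂ) ^ (-ζ + υ + z)))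

/-- The K-matrix
`K(z) = k(z)[[q^ζ-q^{-ζ}+(q^υ-q^{-υ})q^z, 1-q^{2z}],[1-q^{2z},(q^ζ-q^{-ζ})q^{2z}+(q^υ-q^{-υ})q^z]]`. -/
noncomputable def Kxxz (q : ℝ) (ζ υ z : ℂ) : Matrix (Fin 2) (Fin 2) ℂ :=
  kfun q ζ υ z •
    !![(q : ℂ) ^ ζ - (q : ℂ) ^ (-ζ) + ((q : ℂ) ^ υ - (q : ℂ) ^ (-υ)) * (q : ℂ) ^ z,
        1 - (q : ℂ) ^ (2 * z);
       1 - (q : ℂ) ^ (2 * z),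
       ((q : ℂ) ^ ζ - (q : ℂ) ^ (-ζ)) * (q : ℂ) ^ (2 * z) +
        ((q : ℂ) ^ υ - (q : ℂ) ^ (-υ)) * (q : ℂ) ^ z]

def reflectionMatrix {R : Type*} [CommRing R] (A B w : R) : Matrix (Fin 2) (Fin 2) R :=
  !![A + B * w, 1 - w ^ 2; 1 - w ^ 2, A * w ^ 2 + B * w]

theorem reflectionMatrix_mul_of_mul_eq_one {R : Type*} [CommRing R] (A B w w' : R)
    (h : w * w' = 1) :
    reflectionMatrix A B w * reflectionMatrix A B w' =
      (A ^ 2 + B ^ 2 + 2 + A * B * (w + w') - w ^ 2 - w' ^ 2) • 1 := by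
  ext i j
  fin_cases i <;> fin_cases j <;>
    simp only [reflectionMatrix, Matrix.mul_apply, Fin.sum_univ_two, Matrix.of_apply,
      Matrix.cons_val', Matrix.cons_val_fin_one, Matrix.cons_val_zero, Matrix.cons_val_one,
      Matrix.smul_apply, Matrix.one_apply_eq, Matrix.one_apply_ne, ne_eq, zero_ne_one,
      one_ne_zero, not_false_eq_true, smul_eq_mul, mul_one, mul_zero, Fin.zero_eta, Fin.mk_one]
  · linear_combination (B ^ 2 + w * w' + 1) * h
  · linear_combination (-A * (w * w' + 1) - B * (w + w')) * h
  · linear_combination (-A * (w * w' + 1) - B * (w + w')) * h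
  · linear_combination ((w * w' + 1) * (1 + A ^ 2) + A * B * (w + w') + B ^ 2) * h

theorem Kxxz_eq_smul_reflectionMatrix (q : ℝ) (ζ υ z : ℂ) :
    Kxxz q ζ υ z = kfun q ζ υ z • reflectionMatrix ((q : ℂ) ^ ζ - (q : ℂ) ^ (-ζ))
      ((q : ℂ) ^ υ - (q : ℂ) ^ (-υ)) ((q : ℂ) ^ z) := by
  rw [Kxxz, reflectionMatrix, Complex.cpow_ofNat_mul]

theorem Complex.cpow_neg_add_add {x : ℂ} (hx : x ≠ 0) (s t u : ℂ) :
    x ^ (-s + t + u) = (x ^ s)⁻¹ * x ^ t * x ^ u := by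
  rw [Complex.cpow_add _ _ hx, Complex.cpow_add _ _ hx, Complex.cpow_neg]

theorem Complex.cpow_neg_sub_add {x : ℂ} (hx : x ≠ 0) (s t u : ℂ) :
    x ^ (-s - t + u) = (x ^ s)⁻¹ * (x ^ t)⁻¹ * x ^ u := by
  rw [sub_eq_add_neg, Complex.cpow_neg_add_add hx, Complex.cpow_neg]

theorem reflection_scalar_mul_eq_one {K : Type*} [Field K] {a b w : K}
    (ha : a ≠ 0) (hb : b ≠ 0) (hw : w ≠ 0)
    (h1 : 1 - a⁻¹ * b⁻¹ * w ≠ 0) (h2 : 1 + a⁻¹ * b * w ≠ 0)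
    (h3 : 1 - a⁻¹ * b⁻¹ * w⁻¹ ≠ 0) (h4 : 1 + a⁻¹ * b * w⁻¹ ≠ 0) :
    a⁻¹ / ((1 - a⁻¹ * b⁻¹ * w) * (1 + a⁻¹ * b * w)) *
      (a⁻¹ / ((1 - a⁻¹ * b⁻¹ * w⁻¹) * (1 + a⁻¹ * b * w⁻¹))) *
      ((a - a⁻¹) ^ 2 + (b - b⁻¹) ^ 2 + 2 + (a - a⁻¹) * (b - b⁻¹) * (w + w⁻¹) - w ^ 2 - w⁻¹ ^ 2)
      = 1 := by
  have factor : (a - a⁻¹) ^ 2 + (b - b⁻¹) ^ 2 + 2 + (a - a⁻¹) * (b - b⁻¹) * (w + w⁻¹)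
      - w ^ 2 - w⁻¹ ^ 2 = a ^ 2 * ((1 - a⁻¹ * b⁻¹ * w) * (1 + a⁻¹ * b * w)) *
        ((1 - a⁻¹ * b⁻¹ * w⁻¹) * (1 + a⁻¹ * b * w⁻¹)) := by
    field_simp
    ring
  have hP := mul_ne_zero h1 h2
  have hQ := mul_ne_zero h3 h4
  rw [factor]
  generalize (1 - a⁻¹ * b⁻¹ * w) * (1 + a⁻¹ * b * w) = P at hP ⊢
  generalize (1 - a⁻¹ * b⁻¹ * w⁻¹) * (1 + a⁻¹ * b * w⁻¹) = Q at hQ ⊢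
  field_simp

theorem Kxxz_unitarity_general (q : ℝ) (hq : 0 < q) (ζ υ z : ℂ)
    (h1 : 1 - (q : ℂ) ^ (-ζ - υ + z) ≠ 0) (h2 : 1 + (q : ℂ) ^ (-ζ + υ + z) ≠ 0)
    (h3 : 1 - (q : ℂ) ^ (-ζ - υ + -z) ≠ 0) (h4 : 1 + (q : ℂ) ^ (-ζ + υ + -z) ≠ 0) :
    Kxxz q ζ υ z * Kxxz q ζ υ (-z) = 1 := by
  have hq0 : (q : ℂ) ≠ 0 := Complex.ofReal_ne_zero.2 hq.ne'
  have hpow (s : ℂ) : (q : ℂ) ^ s ≠ 0 := Complex.cpow_ne_zero_iff.2 (Or.inl hq0)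
  have hinv : (q : ℂ) ^ z * (q : ℂ) ^ (-z) = 1 := by
    rw [Complex.cpow_neg, mul_inv_cancel₀ (hpow z)]
  rw [Kxxz_eq_smul_reflectionMatrix, Kxxz_eq_smul_reflectionMatrix, smul_mul_smul_comm,
    reflectionMatrix_mul_of_mul_eq_one _ _ _ _ hinv, smul_smul]
  convert one_smul ℂ (1 : Matrix (Fin 2) (Fin 2) ℂ)
  simp only [kfun, Complex.cpow_neg_sub_add hq0, Complex.cpow_neg_add_add hq0,
    Complex.cpow_neg] at h1 h2 h3 h4 ⊢
  exact reflection_scalar_mul_eq_one (hpow ζ) (hpow υ) (hpow z) h1 h2 h3 h4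

/-- Boundary unitarity of the K-matrix: `K(z)K(-z) = Id` on `ℂ²`. -/
theorem Kxxz_unitarity (q : ℝ) (hq : 0 < q) (hq1 : q < 1) (ζ υ z : ℂ)
    (h1 : 1 - (q : ℂ) ^ (-ζ - υ + z) ≠ 0) (h2 : 1 + (q : ℂ) ^ (-ζ + υ + z) ≠ 0)
    (h3 : 1 - (q : ℂ) ^ (-ζ - υ + -z) ≠ 0) (h4 : 1 + (q : ℂ) ^ (-ζ + υ + -z) ≠ 0) :
    Kxxz q ζ υ z * Kxxz q ζ υ (-z) = 1 :=
  Kxxz_unitarity_general q hq ζ υ z h1 h2 h3 h4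
end
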